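/- arXiv:2301.07429 — 8 statements merged into one kernel-verified Lean document; each statement's English description precedes it below -/
import Mathlib

section
/- Let f : (0,∞) → ℝ be a Kneser function of order d (i.e., continuous and satisfying f(λb) - f(λa) ≤ λ^d (f(b) - f(a)) for all λ ≥ 1 and 0 < a ≤ b). If f is differentiable at a point r₀ > 0, then the right derivative function f'₊ is continuous at r₀, i.e., lim_{r → r₀} f'₊(r) = f'(r₀). -/
open Set Filter Topology

/-- `f` is a Kneser function of order `d` on `(0,∞)`: continuous there and satisfying
`f(λb) - f(λa) ≤ λ^d (f(b) - f(a))` for all `λ ≥ 1` and `0 < a ≤ b`. -/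
def IsKneser (f : ℝ → ℝ) (d : ℕ) : Prop :=
  ContinuousOn f (Set.Ioi 0) ∧
    ∀ lam a b : ℝ, 1 ≤ lam → 0 < a → a ≤ b →
      f (lam * b) - f (lam * a) ≤ lam ^ d * (f b - f a)

lemma pw_bounds {d : ℕ} {a r b : ℝ} (ha : 0 < a) (h1 : a ≤ r) (h2 : r ≤ b) :
    min (a^d/a) (b^d/b) ≤ r^d/r ∧ r^d/r ≤ max (a^d/a) (b^d/b) := by
  have hr : 0 < r := lt_of_lt_of_le ha h1
  have hb : 0 < b := lt_of_lt_of_le hr h2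
  rcases Nat.eq_zero_or_pos d with hd | hd
  · subst hd
    simp only [pow_zero]
    constructor
    · exact le_trans (min_le_right _ _) (one_div_le_one_div_of_le hr h2)
    · exact le_trans (one_div_le_one_div_of_le ha h1) (le_max_left _ _)
  · obtain ⟨m, rfl⟩ := Nat.exists_eq_add_of_le hd
    have key : ∀ x : ℝ, 0 < x → x^(1+m)/x = x^m := by
      intro x hx
      rw [add_comm, pow_succ]
      field_simp
    rw [key a ha, key r hr, key b hb]
    constructor
    · exact le_trans (min_le_left _ _) (pow_le_pow_left₀ ha.le h1 m)
    · exact le_trans (pow_le_pow_left₀ hr.le h2 m) (le_max_right _ _)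

lemma pw_mul_le {d : ℕ} {a r b C : ℝ} (ha : 0 < a) (h1 : a ≤ r) (h2 : r ≤ b) :
    C * (r^d/r) ≤ max (C*(a^d/a)) (C*(b^d/b)) := by
  obtain ⟨hmin, hmax⟩ := pw_bounds (d := d) ha h1 h2
  rcases le_total 0 C with hC | hC
  · exact le_trans (mul_le_mul_of_nonneg_left hmax hC)
      (by rcases le_total (a^d/a) (b^d/b) with h | h
          · rw [max_eq_right h]; exact le_max_right _ _
          · rw [max_eq_left h]; exact le_max_left _ _)
  · refine le_trans (mul_le_mul_of_nonpos_left hmin hC) ?_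
    rcases le_total (a^d/a) (b^d/b) with h | h
    · rw [min_eq_left h]; exact le_max_left _ _
    · rw [min_eq_right h]; exact le_max_right _ _

lemma pw_le_mul {d : ℕ} {a r b C : ℝ} (ha : 0 < a) (h1 : a ≤ r) (h2 : r ≤ b) :
    min (C*(a^d/a)) (C*(b^d/b)) ≤ C * (r^d/r) := by
  have h := pw_mul_le (d := d) (C := -C) ha h1 h2
  simp only [neg_mul] at h
  rw [max_neg_neg] at h
  linarith [neg_le_neg h]

lemma sub_le_K {f rd : ℝ → ℝ} {a b K : ℝ} (hab : a ≤ b)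
    (hc : ContinuousOn f (Icc a b))
    (hd : ∀ x ∈ Ico a b, HasDerivWithinAt f (rd x) (Ioi x) x)
    (hK : ∀ x ∈ Ico a b, rd x ≤ K) :
    f b - f a ≤ K * (b - a) := by
  have hB : ∀ x : ℝ, HasDerivAt (fun y => f a + K * (y - a)) K x := by
    intro x
    simpa using (((hasDerivAt_id x).sub_const a).const_mul K).const_add (f a)
  have H := image_le_of_deriv_right_le_deriv_boundary (f := f) (f' := rd)
    (B := fun y => f a + K * (y - a)) (B' := fun _ => K) hc
    (fun x hx => (hd x hx).Ici_of_Ioi) (by simp)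
    (fun x _ => (hB x).continuousAt.continuousWithinAt)
    (fun x hx => (hB x).hasDerivWithinAt) hK
  have := H (right_mem_Icc.2 hab)
  linarith

lemma K_le_sub {f rd : ℝ → ℝ} {a b K : ℝ} (hab : a ≤ b)
    (hc : ContinuousOn f (Icc a b))
    (hd : ∀ x ∈ Ico a b, HasDerivWithinAt f (rd x) (Ioi x) x)
    (hK : ∀ x ∈ Ico a b, K ≤ rd x) :
    K * (b - a) ≤ f b - f a := by
  have H := sub_le_K (f := fun y => -f y) (rd := fun y => -rd y) (K := -K) hab
    hc.neg (fun x hx => (hd x hx).neg) (fun x hx => neg_le_neg (hK x hx))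
  linarith

lemma lemA {f : ℝ → ℝ} {d : ℕ} (hf : IsKneser f d) {a b va vb : ℝ}
    (ha : 0 < a) (hab : a ≤ b)
    (hva : HasDerivWithinAt f va (Ioi a) a)
    (hvb : HasDerivWithinAt f vb (Ioi b) b) :
    vb * (a^d/a) ≤ va * (b^d/b) := by
  have hb : 0 < b := lt_of_lt_of_le ha hab
  set lam := b / a with hlam
  have hlam1 : 1 ≤ lam := (one_le_div ha).2 hab
  have hlam0 : 0 < lam := div_pos hb ha
  have hba : lam * a = b := div_mul_cancel₀ b ha.ne'
  have t1 : Tendsto (slope f a) (𝓝[>] a) (𝓝 va) :=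
    (hasDerivWithinAt_iff_tendsto_slope' (by simp)).1 hva
  have tmap : Tendsto (fun x => lam * x) (𝓝[>] a) (𝓝[>] b) := by
    apply tendsto_nhdsWithin_of_tendsto_nhds_of_eventually_within
    · have : Tendsto (fun x : ℝ => lam * x) (𝓝 a) (𝓝 (lam * a)) :=
        (continuous_const.mul continuous_id).tendsto a
      rw [hba] at this
      exact this.mono_left nhdsWithin_le_nhds
    · filter_upwards [self_mem_nhdsWithin] with x hx
      have : lam * a < lam * x := by
        exact mul_lt_mul_of_pos_left hx hlam0
      rw [hba] at this
      exact this
  have t2 : Tendsto (fun x => slope f b (lam * x)) (𝓝[>] a) (𝓝 vb) :=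
    ((hasDerivWithinAt_iff_tendsto_slope' (by simp)).1 hvb).comp tmap
  have key : ∀ x ∈ Ioi a, slope f b (lam * x) ≤ (lam ^ d * a / b) * slope f a x := by
    intro x hx
    have hxa : a < x := hx
    have hden : (0:ℝ) < x - a := by linarith
    have hkn := hf.2 lam a x hlam1 ha hxa.le
    rw [slope_def_field, slope_def_field]
    have h1 : lam * x - b = lam * (x - a) := by rw [← hba]; ring
    have h2 : f b = f (lam * a) := by rw [hba]
    rw [h1, h2, div_le_iff₀ (by positivity)]
    have h3 : lam ^ d * a / b * ((f x - f a) / (x - a)) * (lam * (x - a))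
        = lam ^ d * (f x - f a) := by
      rw [hlam]
      field_simp
    rw [h3]
    exact hkn
  have hmain : vb ≤ (lam ^ d * a / b) * va :=
    le_of_tendsto_of_tendsto t2 (t1.const_mul _)
      (eventually_mem_nhdsWithin.mono key)
  have hpa : (0:ℝ) < a^d/a := div_pos (pow_pos ha d) ha
  calc vb * (a^d/a) ≤ ((lam ^ d * a / b) * va) * (a^d/a) :=
        mul_le_mul_of_nonneg_right hmain hpa.le
    _ = va * (b^d/b) := by
        rw [hlam, div_pow]
        field_simp

lemma rd_ge {f rd : ℝ → ℝ} {d : ℕ} (hf : IsKneser f d)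
    (hrd : ∀ r > (0:ℝ), HasDerivWithinAt f (rd r) (Set.Ioi r) r)
    {r b : ℝ} (hr : 0 < r) (hrb : r < b) :
    min ((f b - f r)/(b - r)) (((f b - f r)/(b - r)) * ((r^d/r)/(b^d/b))) ≤ rd r := by
  have hb : 0 < b := lt_trans hr hrb
  have hpr : (0:ℝ) < r^d/r := div_pos (pow_pos hr d) hr
  have hpb : (0:ℝ) < b^d/b := div_pos (pow_pos hb d) hb
  set K := max (rd r) (rd r * ((b^d/b)/(r^d/r))) with hK
  have hbound : ∀ x ∈ Ico r b, rd x ≤ K := by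
    intro x hx
    have hrx : 0 < x := lt_of_lt_of_le hr hx.1
    have h := lemA hf hr hx.1 (hrd r hr) (hrd x hrx)
    -- rd x * (r^d/r) ≤ rd r * (x^d/x)
    have h2 : rd x ≤ (rd r / (r^d/r)) * (x^d/x) := by
      rw [div_mul_eq_mul_div, le_div_iff₀ hpr]
      linarith [h]
    refine le_trans h2 (le_trans (pw_mul_le hr hx.1 hx.2.le) ?_)
    apply max_le_max
    · exact le_of_eq (div_mul_cancel₀ _ hpr.ne')
    · exact le_of_eq (by rw [div_mul_eq_mul_div, mul_div_assoc])
  have hmvt := sub_le_K (f := f) (rd := rd) hrb.le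
    (hf.1.mono (fun x hx => lt_of_lt_of_le hr hx.1))
    (fun x hx => hrd x (lt_of_lt_of_le hr hx.1)) hbound
  have hS : (f b - f r)/(b - r) ≤ K := by
    rw [div_le_iff₀ (by linarith)]
    linarith
  rcases le_max_iff.1 hS with h | h
  · exact le_trans (min_le_left _ _) h
  · refine le_trans (min_le_right _ _) ?_
    have hq : (0:ℝ) < (b^d/b)/(r^d/r) := div_pos hpb hpr
    have heq : ((f b - f r)/(b - r)) * ((r^d/r)/(b^d/b))
        = ((f b - f r)/(b - r)) / ((b^d/b)/(r^d/r)) := by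
      field_simp
    rw [heq, div_le_iff₀ hq]
    exact h

lemma rd_le {f rd : ℝ → ℝ} {d : ℕ} (hf : IsKneser f d)
    (hrd : ∀ r > (0:ℝ), HasDerivWithinAt f (rd r) (Set.Ioi r) r)
    {a r : ℝ} (ha : 0 < a) (har : a < r) :
    rd r ≤ max ((f r - f a)/(r - a)) (((f r - f a)/(r - a)) * ((r^d/r)/(a^d/a))) := by
  have hr : 0 < r := lt_trans ha har
  have hpr : (0:ℝ) < r^d/r := div_pos (pow_pos hr d) hr
  have hpa : (0:ℝ) < a^d/a := div_pos (pow_pos ha d) ha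
  set K := min (rd r * ((a^d/a)/(r^d/r))) (rd r) with hK
  have hbound : ∀ x ∈ Ico a r, K ≤ rd x := by
    intro x hx
    have hxx : 0 < x := lt_of_lt_of_le ha hx.1
    have h := lemA hf hxx hx.2.le (hrd x hxx) (hrd r hr)
    -- rd r * (x^d/x) ≤ rd x * (r^d/r)
    have h2 : (rd r / (r^d/r)) * (x^d/x) ≤ rd x := by
      rw [div_mul_eq_mul_div, div_le_iff₀ hpr]
      linarith [h]
    refine le_trans (le_trans ?_ (pw_le_mul ha hx.1 hx.2.le)) h2
    apply min_le_min
    · exact le_of_eq (by rw [div_mul_eq_mul_div, mul_div_assoc])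
    · exact le_of_eq (div_mul_cancel₀ (rd r) hpr.ne').symm
  have hmvt := K_le_sub (f := f) (rd := rd) har.le
    (hf.1.mono (fun x hx => lt_of_lt_of_le ha hx.1))
    (fun x hx => hrd x (lt_of_lt_of_le ha hx.1)) hbound
  have hS : K ≤ (f r - f a)/(r - a) := by
    rw [le_div_iff₀ (by linarith)]
    linarith
  rcases min_le_iff.1 hS with h | h
  · refine le_trans ?_ (le_max_right _ _)
    have hqa : (0:ℝ) < (a^d/a)/(r^d/r) := div_pos hpa hpr
    have heq : ((f r - f a)/(r - a)) * ((r^d/r)/(a^d/a))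
        = ((f r - f a)/(r - a)) / ((a^d/a)/(r^d/r)) := by
      field_simp
    rw [heq, le_div_iff₀ hqa]
    exact h
  · exact le_trans h (le_max_left _ _)


/-- If a Kneser function `f` of order `d` is differentiable at `r₀ > 0`, then its right
derivative function `rd` is continuous at `r₀`: `lim_{r → r₀} f'₊(r) = f'(r₀)`. -/
theorem stmt0 (f : ℝ → ℝ) (d : ℕ) (hf : IsKneser f d)
    (rd : ℝ → ℝ) (hrd : ∀ r > (0:ℝ), HasDerivWithinAt f (rd r) (Set.Ioi r) r)
    (r₀ L : ℝ) (hr₀ : 0 < r₀) (hL : HasDerivAt f L r₀) :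
    Filter.Tendsto rd (nhdsWithin r₀ (Set.Ioi 0)) (nhds L) := by
  have hp₀ : (0:ℝ) < r₀^d/r₀ := div_pos (pow_pos hr₀ d) hr₀
  have hLIoi : HasDerivWithinAt f L (Ioi r₀) r₀ := hL.hasDerivWithinAt
  have hfc : ContinuousAt f r₀ := hf.1.continuousAt (Ioi_mem_nhds hr₀)
  have contφ : Tendsto (fun r : ℝ => L * (r^d/r) / (r₀^d/r₀)) (𝓝 r₀) (𝓝 L) := by
    have h1 : ContinuousAt (fun r : ℝ => L * (r^d/r) / (r₀^d/r₀)) r₀ :=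
      (continuousAt_const.mul (((continuous_pow d).continuousAt).div
        continuousAt_id hr₀.ne')).div_const _
    have h2 : L * (r₀^d/r₀) / (r₀^d/r₀) = L := by
      rw [mul_div_assoc, div_self hp₀.ne', mul_one]
    have h3 := h1.tendsto
    rwa [h2] at h3
  have contq : Tendsto (fun x : ℝ => (r₀^d/r₀)/(x^d/x)) (𝓝 r₀) (𝓝 1) := by
    have h1 : ContinuousAt (fun x : ℝ => (r₀^d/r₀)/(x^d/x)) r₀ :=
      continuousAt_const.div (((continuous_pow d).continuousAt).div
        continuousAt_id hr₀.ne') hp₀.ne'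
    have h3 := h1.tendsto
    rwa [div_self hp₀.ne'] at h3
  have hslope : Tendsto (slope f r₀) (𝓝[≠] r₀) (𝓝 L) := hasDerivAt_iff_tendsto_slope.1 hL
  have hsr : Tendsto (fun b : ℝ => (f b - f r₀)/(b - r₀)) (𝓝[>] r₀) (𝓝 L) := by
    have h3 := hslope.mono_left
      (nhdsWithin_mono r₀ (fun x (hx : r₀ < x) => (ne_of_gt hx : x ≠ r₀)))
    rwa [slope_fun_def_field] at h3
  have hsl : Tendsto (fun a : ℝ => (f r₀ - f a)/(r₀ - a)) (𝓝[<] r₀) (𝓝 L) := by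
    have h3 := hslope.mono_left
      (nhdsWithin_mono r₀ (fun x (hx : x < r₀) => (ne_of_lt hx : x ≠ r₀)))
    rw [slope_fun_def_field] at h3
    refine h3.congr (fun x => ?_)
    rw [← neg_div_neg_eq]
    ring_nf
  rw [show nhdsWithin r₀ (Set.Ioi 0) = 𝓝 r₀ from nhdsWithin_eq_nhds.2 (Ioi_mem_nhds hr₀)]
  refine tendsto_order.2 ⟨fun c hc => ?_, fun c hc => ?_⟩
  · -- c < L : lower bound
    have E1 : ∀ᶠ r in 𝓝 r₀, 0 < r → r ≤ r₀ → c < rd r := by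
      filter_upwards [contφ.eventually_const_lt hc] with r hφ hr0 hr1
      have h := lemA hf hr0 hr1 (hrd r hr0) hLIoi
      have h2 : L * (r^d/r) / (r₀^d/r₀) ≤ rd r := by
        rw [div_le_iff₀ hp₀]; linarith
      linarith
    have E2 : ∀ᶠ r in 𝓝 r₀, 0 < r → r₀ ≤ r → c < rd r := by
      have hΦ : Tendsto (fun b : ℝ => min ((f b - f r₀)/(b - r₀))
          (((f b - f r₀)/(b - r₀)) * ((r₀^d/r₀)/(b^d/b)))) (𝓝[>] r₀) (𝓝 (min L (L*1))) :=
        hsr.min (hsr.mul (contq.mono_left nhdsWithin_le_nhds))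
      rw [mul_one, min_self] at hΦ
      obtain ⟨b, hbΦ, hb⟩ := ((hΦ.eventually_const_lt hc).and self_mem_nhdsWithin).exists
      have hbr : r₀ < b := hb
      have hΨc : Tendsto (fun r : ℝ => min ((f b - f r)/(b - r))
          (((f b - f r)/(b - r)) * ((r^d/r)/(b^d/b)))) (𝓝 r₀)
          (𝓝 (min ((f b - f r₀)/(b - r₀))
            (((f b - f r₀)/(b - r₀)) * ((r₀^d/r₀)/(b^d/b))))) := by
        have c1 : ContinuousAt (fun r : ℝ => (f b - f r)/(b - r)) r₀ :=
          (continuousAt_const.sub hfc).div (continuousAt_const.sub continuousAt_id)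
            (sub_ne_zero.2 (ne_of_gt hbr))
        have c2 : ContinuousAt (fun r : ℝ => (r^d/r)/(b^d/b)) r₀ :=
          (((continuous_pow d).continuousAt).div continuousAt_id hr₀.ne').div_const _
        exact c1.tendsto.min (c1.tendsto.mul c2.tendsto)
      filter_upwards [hΨc.eventually_const_lt hbΦ, eventually_lt_nhds hbr] with r h1 h2 hr0 _
      exact lt_of_lt_of_le h1 (rd_ge hf hrd hr0 h2)
    filter_upwards [E1, E2, eventually_gt_nhds hr₀] with r h1 h2 hr0
    rcases le_total r r₀ with h | h
    · exact h1 hr0 h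
    · exact h2 hr0 h
  · -- L < c : upper bound
    have E2 : ∀ᶠ r in 𝓝 r₀, 0 < r → r₀ ≤ r → rd r < c := by
      filter_upwards [contφ.eventually_lt_const hc] with r hφ hr0 hr1
      have h := lemA hf hr₀ hr1 hLIoi (hrd r hr0)
      have h2 : rd r ≤ L * (r^d/r) / (r₀^d/r₀) := by
        rw [le_div_iff₀ hp₀]; linarith
      linarith
    have E1 : ∀ᶠ r in 𝓝 r₀, 0 < r → r ≤ r₀ → rd r < c := by
      have hΦ : Tendsto (fun a : ℝ => max ((f r₀ - f a)/(r₀ - a))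
          (((f r₀ - f a)/(r₀ - a)) * ((r₀^d/r₀)/(a^d/a)))) (𝓝[<] r₀) (𝓝 (max L (L*1))) :=
        hsl.max (hsl.mul (contq.mono_left nhdsWithin_le_nhds))
      rw [mul_one, max_self] at hΦ
      have h0 : ∀ᶠ a in 𝓝[<] r₀, 0 < a :=
        eventually_nhdsWithin_of_eventually_nhds (eventually_gt_nhds hr₀)
      obtain ⟨a, ⟨haΦ, ha0⟩, ha⟩ :=
        (((hΦ.eventually_lt_const hc).and h0).and self_mem_nhdsWithin).exists
      have har : a < r₀ := ha
      have hΨc : Tendsto (fun r : ℝ => max ((f r - f a)/(r - a))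
          (((f r - f a)/(r - a)) * ((r^d/r)/(a^d/a)))) (𝓝 r₀)
          (𝓝 (max ((f r₀ - f a)/(r₀ - a))
            (((f r₀ - f a)/(r₀ - a)) * ((r₀^d/r₀)/(a^d/a))))) := by
        have c1 : ContinuousAt (fun r : ℝ => (f r - f a)/(r - a)) r₀ :=
          (hfc.sub continuousAt_const).div (continuousAt_id.sub continuousAt_const)
            (sub_ne_zero.2 (ne_of_gt har))
        have c2 : ContinuousAt (fun r : ℝ => (r^d/r)/(a^d/a)) r₀ :=
          (((continuous_pow d).continuousAt).div continuousAt_id hr₀.ne').div_const _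
        exact c1.tendsto.max (c1.tendsto.mul c2.tendsto)
      filter_upwards [hΨc.eventually_lt_const haΦ, eventually_gt_nhds har] with r h1 h2 hr0 _
      exact lt_of_le_of_lt (rd_le hf hrd ha0 h2) h1
    filter_upwards [E1, E2, eventually_gt_nhds hr₀] with r h1 h2 hr0
    rcases le_total r r₀ with h | h
    · exact h1 hr0 h
    · exact h2 hr0 h
end

section
/- Let f : (0,∞) → ℝ be a Kneser function whose right derivative f'₊ is right-continuous and whose left derivative f'₋ is left-continuous, with f'₊(r) ≤ f'₋(r) for all r. If f is differentiable at r₀, then lim_{r → r₀} f'₋(r) = f'(r₀). -/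
open Set Filter

/-- Left derivative of a nonnegative function vanishing at `b` is nonpositive. -/
lemma left_deriv_nonpos (F : ℝ → ℝ) (b D : ℝ) (hb : 0 < b)
    (hF : HasDerivWithinAt F D (Set.Iio b) b) (hFb : F b = 0)
    (hpos : ∀ a ∈ Set.Ioo 0 b, 0 ≤ F a) : D ≤ 0 := by
  rw [hasDerivWithinAt_iff_tendsto_slope] at hF
  have hsub : Set.Iio b \ {b} = Set.Iio b := by
    ext x; simp (config := { contextual := true }) [ne_of_lt]
  rw [hsub] at hF
  refine le_of_tendsto hF ?_
  have hmem : Set.Ioo 0 b ∈ nhdsWithin b (Set.Iio b) := by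
    rw [mem_nhdsWithin]
    exact ⟨Set.Ioi 0, isOpen_Ioi, hb, by intro x hx; exact ⟨hx.1, hx.2⟩⟩
  filter_upwards [hmem, self_mem_nhdsWithin] with a ha (hab : a < b)
  have hslope : slope F b a = F a / (a - b) := by
    rw [slope_def_field, hFb]
    ring
  rw [hslope]
  exact div_nonpos_of_nonneg_of_nonpos (hpos a ha) (by linarith)

/-- Key Kneser inequality on left derivatives: `λ · ld(λb) ≤ λ^d · ld(b)`. -/
lemma kneser_ld_ineq (f : ℝ → ℝ) (d : ℕ) (hf : IsKneser f d) (ld : ℝ → ℝ)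
    (hld : ∀ r > (0:ℝ), HasDerivWithinAt f (ld r) (Set.Iio r) r)
    (b t : ℝ) (hb : 0 < b) (hbt : b ≤ t) :
    (t / b) * ld t ≤ (t / b) ^ d * ld b := by
  set lam := t / b with hlam_def
  have hlam : 1 ≤ lam := (one_le_div hb).2 hbt
  have hlam0 : 0 < lam := lt_of_lt_of_le one_pos hlam
  have hlb : lam * b = t := div_mul_cancel₀ t (ne_of_gt hb)
  have ht : 0 < t := lt_of_lt_of_le hb hbt
  set F : ℝ → ℝ := fun a => lam ^ d * (f b - f a) - (f (lam * b) - f (lam * a)) with hF_def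
  have hFb : F b = 0 := by simp [hF_def]
  have hpos : ∀ a ∈ Set.Ioo 0 b, 0 ≤ F a := by
    intro a ha
    have := hf.2 lam a b hlam ha.1 (le_of_lt ha.2)
    simp only [hF_def]; linarith
  have h1 : HasDerivWithinAt (fun a => f (lam * a)) (ld t * lam) (Set.Iio b) b := by
    have inner : HasDerivWithinAt (fun a => lam * a) lam (Set.Iio b) b :=
      by simpa using ((hasDerivAt_id b).const_mul lam).hasDerivWithinAt (s := Set.Iio b)
    have outer : HasDerivWithinAt f (ld t) (Set.Iio (lam * b)) (lam * b) := by
      rw [hlb]; exact hld t ht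
    have maps : Set.MapsTo (fun a => lam * a) (Set.Iio b) (Set.Iio (lam * b)) := by
      intro x hx
      exact mul_lt_mul_of_pos_left hx hlam0
    exact HasDerivWithinAt.comp b outer inner maps
  have h2 : HasDerivWithinAt F (lam ^ d * (0 - ld b) - (0 - ld t * lam)) (Set.Iio b) b := by
    have hc : HasDerivWithinAt (fun _ : ℝ => f b) 0 (Set.Iio b) b :=
      (hasDerivAt_const b (f b)).hasDerivWithinAt
    have hc2 : HasDerivWithinAt (fun _ : ℝ => f (lam * b)) 0 (Set.Iio b) b :=
      (hasDerivAt_const b (f (lam * b))).hasDerivWithinAt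
    exact ((hc.sub (hld b hb)).const_mul (lam ^ d)).sub (hc2.sub h1)
  have hD := left_deriv_nonpos F b _ hb h2 hFb hpos
  nlinarith [hD]

/-- If `f` is a Kneser function with right derivative `rd` (right-continuous), left derivative
`ld` (left-continuous), `rd ≤ ld` on `(0,∞)`, and `f` is differentiable at `r₀ > 0`, then
`lim_{r → r₀} f'₋(r) = f'(r₀)`. -/
theorem stmt1 (f : ℝ → ℝ) (d : ℕ) (hf : IsKneser f d)
    (rd ld : ℝ → ℝ)
    (hrd : ∀ r > (0:ℝ), HasDerivWithinAt f (rd r) (Set.Ioi r) r)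
    (hld : ∀ r > (0:ℝ), HasDerivWithinAt f (ld r) (Set.Iio r) r)
    (hrc : ∀ r > (0:ℝ), ContinuousWithinAt rd (Set.Ici r) r)
    (hlc : ∀ r > (0:ℝ), ContinuousWithinAt ld (Set.Iic r) r)
    (hle : ∀ r > (0:ℝ), rd r ≤ ld r)
    (r₀ L : ℝ) (hr₀ : 0 < r₀) (hL : HasDerivAt f L r₀) :
    Filter.Tendsto ld (nhdsWithin r₀ (Set.Ioi 0)) (nhds L) := by
  have hldL : ld r₀ = L :=
    (uniqueDiffWithinAt_Iio r₀).eq_deriv _ (hld r₀ hr₀) (hL.hasDerivWithinAt)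
  have hrdL : rd r₀ = L :=
    (uniqueDiffWithinAt_Ioi r₀).eq_deriv _ (hrd r₀ hr₀) (hL.hasDerivWithinAt)
  have hsplit : nhdsWithin r₀ (Set.Ioi 0) ≤
      nhdsWithin r₀ (Set.Iic r₀) ⊔ nhdsWithin r₀ (Set.Ioi r₀) := by
    rw [← nhdsWithin_union]
    apply nhdsWithin_mono
    intro x _
    rcases le_or_gt x r₀ with h | h
    · exact Or.inl h
    · exact Or.inr h
  apply Filter.Tendsto.mono_left _ hsplit
  rw [Filter.tendsto_sup]
  constructor
  · have h := hlc r₀ hr₀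
    rw [ContinuousWithinAt, hldL] at h
    exact h
  · have hlow : Filter.Tendsto rd (nhdsWithin r₀ (Set.Ioi r₀)) (nhds L) := by
      have h := hrc r₀ hr₀
      rw [ContinuousWithinAt, hrdL] at h
      exact h.mono_left (nhdsWithin_mono r₀ Set.Ioi_subset_Ici_self)
    have hup : Filter.Tendsto (fun r => (r / r₀) ^ d * L / (r / r₀))
        (nhdsWithin r₀ (Set.Ioi r₀)) (nhds L) := by
      have hc : ContinuousAt (fun r => (r / r₀) ^ d * L / (r / r₀)) r₀ := by
        apply ContinuousAt.div
        · exact ((continuousAt_id.div_const r₀).pow d).mul continuousAt_const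
        · exact continuousAt_id.div_const r₀
        · simp [ne_of_gt hr₀]
      have hval : (r₀ / r₀) ^ d * L / (r₀ / r₀) = L := by
        rw [div_self (ne_of_gt hr₀)]; simp
      have := hc.tendsto.mono_left (nhdsWithin_le_nhds (s := Set.Ioi r₀))
      rwa [hval] at this
    refine tendsto_of_tendsto_of_tendsto_of_le_of_le' hlow hup ?_ ?_
    · filter_upwards [self_mem_nhdsWithin] with r (hr : r₀ < r)
      exact hle r (lt_trans hr₀ hr)
    · filter_upwards [self_mem_nhdsWithin] with r (hr : r₀ < r)
      have hr0 : 0 < r := lt_trans hr₀ hr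
      have key := kneser_ld_ineq f d hf ld hld r₀ r hr₀ (le_of_lt hr)
      rw [hldL] at key
      have hlam0 : 0 < r / r₀ := div_pos hr0 hr₀
      have : ld r = (r / r₀) * ld r / (r / r₀) := by
        field_simp
      rw [this]
      exact div_le_div_of_nonneg_right key hlam0.le
end

section
/- Let A ⊆ ℝ^d be a nonempty set and r > 0. Every point z of the positive boundary ∂⁺A_r of the open r-parallel set A_r has a unique nearest point in A, i.e., ∂⁺A_r ⊆ Unp(A). -/
open Set Metric

variable {d : ℕ}

/-- The open `r`-parallel set of `A`. -/
def parSet (A : Set (EuclideanSpace ℝ (Fin d))) (r : ℝ) : Set (EuclideanSpace ℝ (Fin d)) :=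
  {x | Metric.infDist x A < r}

/-- The positive boundary of `Z`: boundary points `z` for which some `y ∉ closure Z`
satisfies `|y - z| = dist(y, Z)`. -/
def posBoundary (Z : Set (EuclideanSpace ℝ (Fin d))) : Set (EuclideanSpace ℝ (Fin d)) :=
  {z | z ∈ frontier Z ∧ ∃ y, y ∉ closure Z ∧ dist y z = Metric.infDist y Z}

/-- `Unp A`: points having a unique nearest point in the closure of `A`. -/
def Unp (A : Set (EuclideanSpace ℝ (Fin d))) : Set (EuclideanSpace ℝ (Fin d)) :=
  {x | ∃! a, a ∈ closure A ∧ dist x a = Metric.infDist x A}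

/-!
A point `y` outside the closure of `A_r` with `dist y z = dist(y, A_r) = s` satisfies
`dist(y, A) = s + r`, while a nearest point `a` of `z` in `closure A` lies at distance `r` from `z`.
So `dist y a ≤ s + r ≤ dist(y, A)` forces equality in the triangle inequality: `a` lies on the
ray from `y` through `z`, at distance `r` beyond `z`, which determines it.
-/

namespace Metric

theorem infDist_eq_of_mem_frontier_thickening {X : Type*} [PseudoMetricSpace X] {A : Set X}
    {r : ℝ} (hr : 0 ≤ r) {z : X} (hz : z ∈ frontier (thickening r A)) : infDist z A = r := by
  rw [infDist, frontier_thickening_subset A hz, ENNReal.toReal_ofReal hr]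

variable {E : Type*} [NormedAddCommGroup E] [NormedSpace ℝ E]

theorem infDist_thickening {A : Set E} (hA : A.Nonempty) {r : ℝ} (hr : 0 < r) {y : E}
    (hy : r ≤ infDist y A) : infDist y (thickening r A) = infDist y A - r := by
  rw [infDist, infEDist_thickening hr, ENNReal.toReal_sub_of_le _ (infEDist_ne_top hA),
    ENNReal.toReal_ofReal hr.le, ← infDist]
  rw [← ENNReal.ofReal_toReal (infEDist_ne_top hA)]
  exact ENNReal.ofReal_le_ofReal hy

end Metric

/-- Equality in the triangle inequality puts `a` and `b` on the ray from `y` through `z`. -/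
theorem eq_of_dist_add_dist_eq_of_dist_eq {E : Type*} [NormedAddCommGroup E] [NormedSpace ℝ E]
    [StrictConvexSpace ℝ E] {y z a b : E} (hyz : y ≠ z) (ha : dist y z + dist z a = dist y a)
    (hb : dist y z + dist z b = dist y b) (hab : dist z a = dist z b) : a = b := by
  have hza := (dist_add_dist_eq_iff.mp ha).sameRay_vsub
  have hzb := (dist_add_dist_eq_iff.mp hb).sameRay_vsub
  have hray : SameRay ℝ (a - z) (b - z) :=
    hza.symm.trans hzb fun h => absurd (sub_eq_zero.mp h).symm hyz
  simpa using hray.eq_of_norm_eq (by simpa [dist_eq_norm'] using hab)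

theorem parSet_eq_thickening {A : Set (EuclideanSpace ℝ (Fin d))} (hA : A.Nonempty) (r : ℝ) :
    parSet A r = thickening r A :=
  Set.ext fun _ => (mem_thickening_iff_infDist_lt hA).symm

/-- Every point of the positive boundary of the open `r`-parallel set of a nonempty set `A`
has a unique nearest point in `A`. -/
theorem stmt2 (A : Set (EuclideanSpace ℝ (Fin d))) (hA : A.Nonempty) (r : ℝ) (hr : 0 < r) :
    posBoundary (parSet A r) ⊆ Unp A := by
  rintro z ⟨hzf, y, hyc, hyz⟩
  rw [parSet_eq_thickening hA] at hzf hyc hyz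
  have hzA : infDist z A = r := infDist_eq_of_mem_frontier_thickening hr.le hzf
  have hyA : r ≤ infDist y A :=
    not_lt.mp fun h => hyc (subset_closure ((mem_thickening_iff_infDist_lt hA).mpr h))
  have hy_ne_z : y ≠ z := by
    rintro rfl
    exact hyc hzf.1
  have hnearest_aligned : ∀ a ∈ closure A, dist z a = infDist z A →
      dist y z + dist z a = dist y a := by
    intro a ha hza
    refine le_antisymm ?_ (dist_triangle y z a)
    calc dist y z + dist z a = infDist y A := by
          rw [hyz, hza, hzA, infDist_thickening hA hr hyA]; ring
      _ = infDist y (closure A) := infDist_closure.symm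
      _ ≤ dist y a := infDist_le_dist_of_mem ha
  obtain ⟨a₀, ha₀, hza₀⟩ := exists_mem_closure_infDist_eq_dist hA z
  refine ⟨a₀, ⟨ha₀, hza₀.symm⟩, fun a ⟨ha, hza⟩ => ?_⟩
  exact eq_of_dist_add_dist_eq_of_dist_eq hy_ne_z (hnearest_aligned a ha hza)
    (hnearest_aligned a₀ ha₀ hza₀.symm) (hza.trans hza₀)
end

section
/- Let A ⊆ ℝ^d be nonempty and compact, r > 0, and suppose x ∈ ∂A_r has two distinct nearest points a, b ∈ A. Then for every y ∉ closure(A_r), one has dist(y, A_r) < |y - x|. (Equivalently, x is not a farthest-approach witness for any exterior point.) -/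
open Set Metric

variable {d : ℕ}

lemma parSet_mem_closure (A : Set (EuclideanSpace ℝ (Fin d))) (hA : A.Nonempty)
    (hAc : IsCompact A) (r : ℝ) (hr : 0 < r) (y : EuclideanSpace ℝ (Fin d))
    (hy : Metric.infDist y A ≤ r) : y ∈ closure (parSet A r) := by
  obtain ⟨c, hc, hceq⟩ := hAc.exists_infDist_eq_dist hA y
  rw [Metric.mem_closure_iff]
  intro ε hε
  set t : ℝ := min (1/2) (ε / (2 * (r + 1))) with ht
  have htpos : 0 < t := lt_min (by norm_num) (div_pos hε (by linarith))
  have ht1 : t ≤ 1 := le_trans (min_le_left _ _) (by norm_num)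
  refine ⟨y + t • (c - y), ?_, ?_⟩
  · have hzc : dist (y + t • (c - y)) c = (1 - t) * dist y c := by
      rw [dist_eq_norm, dist_eq_norm]
      rw [show y + t • (c - y) - c = (1 - t) • (y - c) by module]
      rw [norm_smul, Real.norm_eq_abs, abs_of_nonneg (by linarith)]
    have h1 : Metric.infDist (y + t • (c - y)) A ≤ (1 - t) * dist y c :=
      hzc ▸ Metric.infDist_le_dist_of_mem hc
    have h2 : dist y c ≤ r := hceq ▸ hy
    have : (1 - t) * dist y c < r := by
      calc (1 - t) * dist y c ≤ (1 - t) * r := by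
            apply mul_le_mul_of_nonneg_left h2; linarith
        _ < r := by nlinarith
    exact lt_of_le_of_lt h1 this
  · have : dist y (y + t • (c - y)) = t * dist y c := by
      rw [dist_eq_norm, dist_eq_norm]
      rw [show y - (y + t • (c - y)) = t • (y - c) by module]
      rw [norm_smul, Real.norm_eq_abs, abs_of_nonneg htpos.le]
    rw [this]
    have h2 : dist y c ≤ r := hceq ▸ hy
    have htε : t ≤ ε / (2 * (r + 1)) := min_le_right _ _
    have : t * dist y c ≤ ε / (2 * (r + 1)) * (r + 1) := by
      apply mul_le_mul htε (by linarith) dist_nonneg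
      positivity
    calc t * dist y c ≤ ε / (2 * (r + 1)) * (r + 1) := this
      _ = ε / 2 := by field_simp
      _ < ε := by linarith

lemma parSet_infDist_le (A : Set (EuclideanSpace ℝ (Fin d))) (hA : A.Nonempty)
    (hAc : IsCompact A) (r : ℝ) (hr : 0 < r) (y : EuclideanSpace ℝ (Fin d))
    (hy : r ≤ Metric.infDist y A) :
    Metric.infDist y (parSet A r) ≤ Metric.infDist y A - r := by
  obtain ⟨c, hc, hceq⟩ := hAc.exists_infDist_eq_dist hA y
  set s : ℝ := dist y c with hs
  have hsr : r ≤ s := hceq ▸ hy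
  have hspos : 0 < s := lt_of_lt_of_le hr hsr
  refine le_of_forall_pos_le_add fun ε hε => ?_
  set δ : ℝ := min ε r with hδ
  have hδpos : 0 < δ := lt_min hε hr
  have hδr : δ ≤ r := min_le_right _ _
  set t : ℝ := (r - δ/2) / s with htdef
  have htpos : 0 < t := div_pos (by linarith) hspos
  have hts : t * s = r - δ/2 := div_mul_cancel₀ _ hspos.ne'
  have ht1 : t ≤ 1 := by
    rw [div_le_one hspos]; linarith
  have hmem : c + t • (y - c) ∈ parSet A r := by
    have hzc : dist (c + t • (y - c)) c = t * s := by
      rw [hs, dist_eq_norm, dist_eq_norm]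
      rw [show c + t • (y - c) - c = t • (y - c) by module]
      rw [norm_smul, Real.norm_eq_abs, abs_of_nonneg htpos.le]
    have : Metric.infDist (c + t • (y - c)) A ≤ t * s :=
      hzc ▸ Metric.infDist_le_dist_of_mem hc
    refine lt_of_le_of_lt this ?_
    rw [hts]; linarith
  have hdyz : dist y (c + t • (y - c)) = (1 - t) * s := by
    rw [hs, dist_eq_norm, dist_eq_norm]
    rw [show y - (c + t • (y - c)) = (1 - t) • (y - c) by module]
    rw [norm_smul, Real.norm_eq_abs, abs_of_nonneg (by linarith)]
  have h1 : Metric.infDist y (parSet A r) ≤ (1 - t) * s :=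
    hdyz ▸ Metric.infDist_le_dist_of_mem hmem
  have : (1 - t) * s = s - (r - δ/2) := by
    rw [sub_mul, one_mul, hts]
  rw [hceq]
  rw [this] at h1
  have : δ/2 ≤ ε := by
    have : δ ≤ ε := min_le_left _ _
    linarith
  linarith

/-- If `x ∈ ∂A_r` has two distinct nearest points in the nonempty compact set `A`, then
for every `y ∉ closure (A_r)` one has `dist(y, A_r) < |y - x|`. -/
theorem stmt3 (A : Set (EuclideanSpace ℝ (Fin d))) (hA : A.Nonempty) (hAc : IsCompact A)
    (r : ℝ) (hr : 0 < r) (x : EuclideanSpace ℝ (Fin d))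
    (hx : x ∈ frontier (parSet A r))
    (a b : EuclideanSpace ℝ (Fin d)) (ha : a ∈ A) (hb : b ∈ A) (hab : a ≠ b)
    (hna : dist x a = Metric.infDist x A) (hnb : dist x b = Metric.infDist x A) :
    ∀ y, y ∉ closure (parSet A r) → Metric.infDist y (parSet A r) < dist y x := by
  -- parSet is open
  have hopen : IsOpen (parSet A r) := by
    have : parSet A r = (fun z => Metric.infDist z A) ⁻¹' Iio r := rfl
    rw [this]
    exact (Metric.continuous_infDist_pt A).isOpen_preimage _ isOpen_Iio
  -- infDist x A = r
  have hxr : Metric.infDist x A = r := by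
    have h1 : x ∈ closure (parSet A r) \ parSet A r := by
      rwa [← hopen.frontier_eq]
    have h2 : r ≤ Metric.infDist x A := not_lt.mp h1.2
    have h3 : Metric.infDist x A ≤ r := by
      have hcl : IsClosed {z : EuclideanSpace ℝ (Fin d) | Metric.infDist z A ≤ r} :=
        isClosed_le (Metric.continuous_infDist_pt A) continuous_const
      have hsub : parSet A r ⊆ {z : EuclideanSpace ℝ (Fin d) | Metric.infDist z A ≤ r} :=
        fun z hz => Set.mem_setOf.mpr (le_of_lt (Set.mem_setOf.mp hz))
      exact closure_minimal hsub hcl h1.1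
    linarith
  intro y hy
  set s : ℝ := Metric.infDist y A with hsdef
  have hrs : r < s := by
    by_contra h
    exact hy (parSet_mem_closure A hA hAc r hr y (not_lt.mp h))
  have h1 : Metric.infDist y (parSet A r) ≤ s - r :=
    parSet_infDist_le A hA hAc r hr y hrs.le
  have h2 : s ≤ r + dist y x := by
    calc s ≤ Metric.infDist x A + dist y x := Metric.infDist_le_infDist_add_dist
      _ = r + dist y x := by rw [hxr]
  refine lt_of_le_of_lt h1 ?_
  by_contra hle
  have hyx : dist y x = s - r := le_antisymm (not_lt.mp hle) (by linarith)
  have hspos : 0 < s := lt_trans hr hrs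
  -- distances to a and b
  have hxa : dist x a = r := by rw [hna, hxr]
  have hxb : dist x b = r := by rw [hnb, hxr]
  have hya : dist y a = s := by
    have h3 : s ≤ dist y a := Metric.infDist_le_dist_of_mem ha
    have h4 : dist y a ≤ dist y x + dist x a := dist_triangle y x a
    rw [hyx, hxa] at h4
    linarith
  have hyb : dist y b = s := by
    have h3 : s ≤ dist y b := Metric.infDist_le_dist_of_mem hb
    have h4 : dist y b ≤ dist y x + dist x b := dist_triangle y x b
    rw [hyx, hxb] at h4
    linarith
  -- betweenness
  have hwa : Wbtw ℝ y x a := by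
    rw [← dist_add_dist_eq_iff, hyx, hxa, hya]; ring
  have hwb : Wbtw ℝ y x b := by
    rw [← dist_add_dist_eq_iff, hyx, hxb, hyb]; ring
  obtain ⟨t, ht01, hteq⟩ := hwa
  obtain ⟨u, hu01, hueq⟩ := hwb
  have hxyt : x - y = t • (a - y) := by
    have := hteq
    rw [AffineMap.lineMap_apply] at this
    simp only [vsub_eq_sub, vadd_eq_add] at this
    rw [← this]; module
  have hxyu : x - y = u • (b - y) := by
    have := hueq
    rw [AffineMap.lineMap_apply] at this
    simp only [vsub_eq_sub, vadd_eq_add] at this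
    rw [← this]; module
  have htge : 0 ≤ t := ht01.1
  have huge : 0 ≤ u := hu01.1
  have hts : t * s = s - r := by
    have : ‖x - y‖ = t * ‖a - y‖ := by
      rw [hxyt, norm_smul, Real.norm_eq_abs, abs_of_nonneg htge]
    rw [← dist_eq_norm x y, ← dist_eq_norm a y, dist_comm x y, dist_comm a y, hyx, hya] at this
    linarith
  have hus : u * s = s - r := by
    have : ‖x - y‖ = u * ‖b - y‖ := by
      rw [hxyu, norm_smul, Real.norm_eq_abs, abs_of_nonneg huge]
    rw [← dist_eq_norm x y, ← dist_eq_norm b y, dist_comm x y, dist_comm b y, hyx, hyb] at this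
    linarith
  have htu : t = u := by
    have : t * s = u * s := by rw [hts, hus]
    exact mul_right_cancel₀ hspos.ne' this
  have htpos : 0 < t := by
    rcases lt_or_eq_of_le htge with h | h
    · exact h
    · exfalso; rw [← h] at hts; simp at hts; linarith
  have : t • (a - y) = t • (b - y) := by
    rw [← hxyt, htu, ← hxyu]
  have hab' : a - y = b - y := smul_right_injective _ htpos.ne' this
  exact hab (sub_left_inj.mp hab')
end

section
/- Let A ⊆ ℝ^d be a closed set and B ⊆ ℝ^d arbitrary. Then for every r > 0, the set A_r ∩ π_A^{-1}(B) is metrically associated with A: for each x in this set there exists y ∈ A with |x - y| = dist(x, A) such that every interior point of the segment [x, y] also lies in A_r ∩ π_A^{-1}(B). -/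
open Set Metric

variable {d : ℕ}

/-- The preimage `π_A⁻¹(B)` of the metric projection: points `x` having a unique nearest
point `a` in `A`, with moreover `a ∈ B`. -/
def projPreimage (A B : Set (EuclideanSpace ℝ (Fin d))) : Set (EuclideanSpace ℝ (Fin d)) :=
  {x | ∃ a, a ∈ A ∧ dist x a = Metric.infDist x A ∧
    (∀ a', a' ∈ A → dist x a' = Metric.infDist x A → a' = a) ∧ a ∈ B}

/-- `X` is metrically associated with `A`: for each `x ∈ X` there is a nearest point `y ∈ A`
of `x` such that every interior point of the segment `[x, y]` belongs to `X`. -/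
def MetricallyAssociated (A X : Set (EuclideanSpace ℝ (Fin d))) : Prop :=
  ∀ x ∈ X, ∃ y ∈ A, dist x y = Metric.infDist x A ∧ ∀ z ∈ openSegment ℝ x y, z ∈ X

/-- For any closed `A` and arbitrary `B`, the set `A_r ∩ π_A⁻¹(B)` is metrically
associated with `A`. -/
theorem stmt4 (A B : Set (EuclideanSpace ℝ (Fin d))) (hA : IsClosed A) (r : ℝ) (hr : 0 < r) :
    MetricallyAssociated A (parSet A r ∩ projPreimage A B) := by
  rintro x ⟨hxr, a, haA, hxa, huniq, haB⟩
  have hAne : A.Nonempty := ⟨a, haA⟩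
  refine ⟨a, haA, hxa, fun z hz => ?_⟩
  have hzseg : z ∈ segment ℝ x a := openSegment_subset_segment ℝ x a hz
  have hsum : dist x z + dist z a = dist x a := dist_add_dist_of_mem_segment hzseg
  -- infDist z A = dist z a
  have h1 : Metric.infDist z A ≤ dist z a := Metric.infDist_le_dist_of_mem haA
  have h2 : dist z a ≤ Metric.infDist z A := by
    have := Metric.infDist_le_infDist_add_dist (x := x) (y := z) (s := A)
    -- infDist x A ≤ infDist z A + dist z x
    have h3 : dist x a ≤ Metric.infDist z A + dist x z := hxa ▸ this
    linarith
  have hzA : Metric.infDist z A = dist z a := le_antisymm h1 h2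
  constructor
  · show Metric.infDist z A < r
    rw [hzA]
    have hdz : 0 ≤ dist x z := dist_nonneg
    calc dist z a ≤ dist x a := by linarith
      _ = Metric.infDist x A := hxa
      _ < r := hxr
  · refine ⟨a, haA, hzA.symm, fun a' ha'A ha'd => ?_, haB⟩
    apply huniq a' ha'A
    have hle : dist x a' ≤ dist x z + dist z a' := dist_triangle _ _ _
    rw [ha'd, hzA] at hle
    have hge : Metric.infDist x A ≤ dist x a' := Metric.infDist_le_dist_of_mem ha'A
    rw [← hxa]
    have : dist x a' ≤ dist x a := by linarith
    linarith [hxa ▸ hge]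
end

section
/- Let A ⊆ ℝ be a nonempty compact set and let N_A ⊆ (0,∞) denote the set of points where the parallel volume function V_A(r) = λ₁({x : dist(x, A) < r}) fails to be differentiable. Then ∑_{s ∈ N_A} s < ∞. -/
/-!
Write `a = inf A`, `b = sup A`. The bounded gaps `(c, d)` of `A` are disjoint subintervals of
`[a, b]`, so their lengths have sum at most `b - a`; in particular only finitely many are longer
than any given `ℓ > 0`. For `r > 0` the points of `(a - r, b + r)` at distance at least `r` from
`A` are exactly the intervals `[c + r, d - r]` over the gaps of length at least `2r`, hence
`V_A(r) = b - a + 2r - ∑_{d - c ≥ 2r} (d - c - 2r)`, a finite sum. The set of gaps entering this sum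
only changes when `2r` crosses a gap length, so `V_A` is affine near every `r` that is not half
the length of a gap. Thus `s ↦ (gap of length 2s)` injects `N_A` into the gaps, and
`∑_{s ∈ N_A} s ≤ (b - a) / 2`.
-/

open Set MeasureTheory

/-- The parallel volume function of `A ⊆ ℝ`. -/
noncomputable def parVol (A : Set ℝ) (r : ℝ) : ℝ :=
  (MeasureTheory.volume {x : ℝ | Metric.infDist x A < r}).toReal

/-- The set of non-differentiability points of the parallel volume function. -/
def NDiff (A : Set ℝ) : Set ℝ :=
  {r : ℝ | 0 < r ∧ ¬ DifferentiableAt ℝ (parVol A) r}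

open Filter Topology

section LinearOrder

variable {α : Type*} [LinearOrder α] {A : Set α} {p : α × α}

def gaps (A : Set α) : Set (α × α) :=
  {p | p.1 ∈ A ∧ p.2 ∈ A ∧ p.1 < p.2 ∧ Disjoint (Ioo p.1 p.2) A}

lemma le_or_le_of_mem_gaps (hp : p ∈ gaps A) {y : α} (hy : y ∈ A) : y ≤ p.1 ∨ p.2 ≤ y := by
  by_contra! h
  exact hp.2.2.2.notMem_of_mem_left ⟨h.1, h.2⟩ hy

lemma gaps_pairwiseDisjoint (A : Set α) :
    (gaps A).PairwiseDisjoint (fun p => Ioo p.1 p.2) := by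
  intro p hp q hq hpq
  refine Set.disjoint_left.2 fun x hxp hxq =>
    hpq (Prod.ext (le_antisymm ?_ ?_) (le_antisymm ?_ ?_))
  · exact (le_or_le_of_mem_gaps hq hp.1).resolve_right (not_le.2 (hxp.1.trans hxq.2))
  · exact (le_or_le_of_mem_gaps hp hq.1).resolve_right (not_le.2 (hxq.1.trans hxp.2))
  · exact (le_or_le_of_mem_gaps hp hq.2.1).resolve_left (not_le.2 (hxp.1.trans hxq.2))
  · exact (le_or_le_of_mem_gaps hq hp.2.1).resolve_left (not_le.2 (hxq.1.trans hxp.2))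

end LinearOrder

section ConditionallyCompleteLinearOrder

variable {α : Type*} [ConditionallyCompleteLinearOrder α] {A : Set α}

lemma Icc_subset_Icc_of_mem_gaps (hb : BddBelow A) (ha : BddAbove A) {p : α × α}
    (hp : p ∈ gaps A) : Icc p.1 p.2 ⊆ Icc (sInf A) (sSup A) :=
  Icc_subset_Icc (csInf_le hb hp.1) (le_csSup ha hp.2.1)

lemma exists_mem_gaps_of_notMem [TopologicalSpace α] [OrderClosedTopology α]
    (hA : IsCompact A) (hne : A.Nonempty) {x : α} (hxa : sInf A ≤ x) (hxb : x ≤ sSup A)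
    (hxA : x ∉ A) : ∃ p ∈ gaps A, x ∈ Ioo p.1 p.2 := by
  have hleft : IsCompact (A ∩ Iic x) := hA.inter_right isClosed_Iic
  have hright : IsCompact (A ∩ Ici x) := hA.inter_right isClosed_Ici
  have hc := hleft.sSup_mem ⟨sInf A, hA.sInf_mem hne, hxa⟩
  have hd := hright.sInf_mem ⟨sSup A, hA.sSup_mem hne, hxb⟩
  have hcx : sSup (A ∩ Iic x) < x := hc.2.lt_of_ne fun h => hxA (h ▸ hc.1)
  have hxd : x < sInf (A ∩ Ici x) := hd.2.lt_of_ne' fun h => hxA (h ▸ hd.1)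
  refine ⟨(sSup (A ∩ Iic x), sInf (A ∩ Ici x)), ⟨hc.1, hd.1, hcx.trans hxd, Set.disjoint_right.2 fun y hyA hy => ?_⟩, hcx, hxd⟩
  rcases le_total y x with hyx | hxy
  · exact (le_csSup hleft.bddAbove ⟨hyA, hyx⟩).not_gt hy.1
  · exact (csInf_le hright.bddBelow ⟨hyA, hxy⟩).not_gt hy.2

end ConditionallyCompleteLinearOrder

section Real

variable {A : Set ℝ} {p : ℝ × ℝ}

lemma infDist_eq_min_of_mem_gaps (hp : p ∈ gaps A) {x : ℝ} (hx : x ∈ Icc p.1 p.2) :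
    Metric.infDist x A = min (x - p.1) (p.2 - x) := by
  refine le_antisymm (le_min ?_ ?_) ((Metric.le_infDist ⟨_, hp.1⟩).2 fun y hy => ?_)
  · simpa [Real.dist_eq, abs_of_nonneg (sub_nonneg.2 hx.1)] using
      Metric.infDist_le_dist_of_mem (x := x) hp.1
  · simpa [Real.dist_eq, abs_of_nonpos (sub_nonpos.2 hx.2)] using
      Metric.infDist_le_dist_of_mem (x := x) hp.2.1
  rw [Real.dist_eq]
  rcases le_or_le_of_mem_gaps hp hy with h | h
  · exact (min_le_left _ _).trans ((by linarith : x - p.1 ≤ x - y).trans (le_abs_self _))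
  · exact (min_le_right _ _).trans ((by linarith : p.2 - x ≤ -(x - y)).trans (neg_le_abs _))

theorem summable_gap_length (hb : BddBelow A) (ha : BddAbove A) :
    Summable (fun p : gaps A => p.1.2 - p.1.1) := by
  refine summable_of_sum_le (c := volume.real (Icc (sInf A) (sSup A)))
    (fun p => sub_nonneg.2 p.2.2.2.1.le) fun u => ?_
  have hdisj : (u : Set (gaps A)).PairwiseDisjoint (fun p => Ioo p.1.1 p.1.2) :=
    fun p _ q _ hpq => gaps_pairwiseDisjoint A p.2 q.2 (Subtype.coe_injective.ne hpq)
  calc ∑ p ∈ u, (p.1.2 - p.1.1) = volume.real (⋃ p ∈ u, Ioo p.1.1 p.1.2) := by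
        rw [measureReal_biUnion_finset hdisj (fun _ _ => measurableSet_Ioo)
          fun _ _ => measure_Ioo_lt_top.ne]
        exact Finset.sum_congr rfl fun p _ => (Real.volume_real_Ioo_of_le p.2.2.2.1.le).symm
    _ ≤ volume.real (Icc (sInf A) (sSup A)) := measureReal_mono (iUnion₂_subset fun p _ =>
        Ioo_subset_Icc_self.trans (Icc_subset_Icc_of_mem_gaps hb ha p.2)) measure_Icc_lt_top.ne

def longGaps (A : Set ℝ) (ℓ : ℝ) : Set (ℝ × ℝ) :=
  {p ∈ gaps A | ℓ ≤ p.2 - p.1}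

lemma longGaps_finite (hb : BddBelow A) (ha : BddAbove A) {ℓ : ℝ} (hℓ : 0 < ℓ) :
    (longGaps A ℓ).Finite := by
  have hshort := (summable_gap_length hb ha).tendsto_cofinite_zero.eventually (gt_mem_nhds hℓ)
  refine ((eventually_cofinite.1 hshort).image Subtype.val).subset ?_
  rintro p ⟨hp, hℓp⟩
  exact ⟨⟨p, hp⟩, not_lt.2 hℓp, rfl⟩

lemma eventually_longGaps_eq (hb : BddBelow A) (ha : BddAbove A) {ℓ₀ : ℝ} (hℓ₀ : 0 < ℓ₀)
    (h : ∀ p ∈ gaps A, p.2 - p.1 ≠ ℓ₀) : ∀ᶠ ℓ in 𝓝 ℓ₀, longGaps A ℓ = longGaps A ℓ₀ := by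
  have hnear : ∀ᶠ ℓ in 𝓝 ℓ₀, ℓ₀ / 2 < ℓ ∧
      ∀ p ∈ longGaps A (ℓ₀ / 2), (ℓ ≤ p.2 - p.1 ↔ ℓ₀ ≤ p.2 - p.1) := by
    refine (lt_mem_nhds (half_lt_self hℓ₀)).and
      ((longGaps_finite hb ha (half_pos hℓ₀)).eventually_all.2 fun p hp => ?_)
    rcases (h p hp.1).lt_or_gt with hlt | hgt
    · filter_upwards [lt_mem_nhds hlt] with ℓ hℓ
      exact iff_of_false hℓ.not_ge (by linarith)
    · filter_upwards [gt_mem_nhds hgt] with ℓ hℓ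
      exact iff_of_true hℓ.le hgt.le
  filter_upwards [hnear] with ℓ ⟨hℓ, hiff⟩
  ext p
  refine and_congr_right fun hp => ?_
  by_cases hlong : ℓ₀ / 2 ≤ p.2 - p.1
  · exact hiff p ⟨hp, hlong⟩
  · exact iff_of_false (by linarith) (by linarith)

lemma infDist_lt_subset_Ioo (hb : BddBelow A) (ha : BddAbove A) (hne : A.Nonempty) (r : ℝ) :
    {x | Metric.infDist x A < r} ⊆ Ioo (sInf A - r) (sSup A + r) := by
  intro x hx
  obtain ⟨y, hy, hxy⟩ := (Metric.infDist_lt_iff hne).1 hx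
  rw [Real.dist_eq, abs_lt] at hxy
  have := csInf_le hb hy
  have := le_csSup ha hy
  constructor <;> linarith

lemma Ioo_inter_setOf_le_infDist (hA : IsCompact A) (hne : A.Nonempty) {r : ℝ} (hr : 0 < r) :
    Ioo (sInf A - r) (sSup A + r) ∩ {x | r ≤ Metric.infDist x A} =
      ⋃ p ∈ longGaps A (2 * r), Icc (p.1 + r) (p.2 - r) := by
  ext x
  constructor
  · rintro ⟨hxI, hxr : r ≤ Metric.infDist x A⟩
    have hxA : x ∉ A := fun hx => by
      rw [Metric.infDist_zero_of_mem hx] at hxr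
      linarith
    have hxa : sInf A ≤ x := by
      by_contra! h
      have := Metric.infDist_le_dist_of_mem (x := x) (hA.sInf_mem hne)
      rw [Real.dist_eq, abs_of_neg (by linarith)] at this
      linarith [hxI.1]
    have hxb : x ≤ sSup A := by
      by_contra! h
      have := Metric.infDist_le_dist_of_mem (x := x) (hA.sSup_mem hne)
      rw [Real.dist_eq, abs_of_pos (by linarith)] at this
      linarith [hxI.2]
    obtain ⟨p, hp, hxp⟩ := exists_mem_gaps_of_notMem hA hne hxa hxb hxA
    rw [infDist_eq_min_of_mem_gaps hp (Ioo_subset_Icc_self hxp), le_min_iff] at hxr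
    exact mem_biUnion (x := p) ⟨hp, by linarith⟩ ⟨by linarith, by linarith⟩
  · intro hx
    obtain ⟨p, hp, hx⟩ := mem_iUnion₂.1 hx
    have hxp : x ∈ Icc p.1 p.2 := ⟨by linarith [hx.1], by linarith [hx.2]⟩
    have hxI := Icc_subset_Icc_of_mem_gaps hA.bddBelow hA.bddAbove hp.1 hxp
    refine ⟨⟨by linarith [hxI.1], by linarith [hxI.2]⟩, ?_⟩
    change r ≤ Metric.infDist x A
    rw [infDist_eq_min_of_mem_gaps hp.1 hxp]
    exact le_min (by linarith [hx.1]) (by linarith [hx.2])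

theorem parVol_eq (hA : IsCompact A) (hne : A.Nonempty) {r : ℝ} (hr : 0 < r) :
    parVol A r = sSup A - sInf A + 2 * r - ∑ᶠ p ∈ longGaps A (2 * r), (p.2 - p.1 - 2 * r) := by
  have hfin := longGaps_finite hA.bddBelow hA.bddAbove (by positivity : 0 < 2 * r)
  have hab : sInf A ≤ sSup A := csInf_le_csSup hne hA.bddBelow hA.bddAbove
  have hset : {x | Metric.infDist x A < r} = Ioo (sInf A - r) (sSup A + r) \
      (Ioo (sInf A - r) (sSup A + r) ∩ {x | r ≤ Metric.infDist x A}) := by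
    rw [sdiff_self_inter]
    ext x
    exact ⟨fun hx => ⟨infDist_lt_subset_Ioo hA.bddBelow hA.bddAbove hne r hx, (hx.out.not_ge ·)⟩,
      fun hx => show Metric.infDist x A < r from not_le.1 hx.2⟩
  have hdisj : (hfin.toFinset : Set (ℝ × ℝ)).PairwiseDisjoint
      (fun p => Icc (p.1 + r) (p.2 - r)) := by
    rw [hfin.coe_toFinset]
    exact ((gaps_pairwiseDisjoint A).subset fun p hp => hp.1).mono_on
      fun p _ => Icc_subset_Ioo (by linarith) (by linarith)
  have hholes : volume.real (⋃ p ∈ longGaps A (2 * r), Icc (p.1 + r) (p.2 - r)) =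
      ∑ᶠ p ∈ longGaps A (2 * r), (p.2 - p.1 - 2 * r) := by
    conv_lhs => rw [← hfin.coe_toFinset, Finset.set_biUnion_coe]
    rw [finsum_mem_eq_finite_toFinset_sum _ hfin, measureReal_biUnion_finset hdisj (fun _ _ => measurableSet_Icc)
        fun _ _ => measure_Icc_lt_top.ne]
    refine Finset.sum_congr rfl fun p hp => ?_
    rw [Real.volume_real_Icc_of_le (by linarith [(hfin.mem_toFinset.1 hp).2])]
    ring
  rw [parVol, ← measureReal_def, hset, measureReal_sdiff inter_subset_left
    (measurableSet_Ioo.inter (measurableSet_le measurable_const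
      (Metric.continuous_infDist_pt A).measurable)) measure_Ioo_lt_top.ne,
    Ioo_inter_setOf_le_infDist hA hne hr, hholes, Real.volume_real_Ioo_of_le (by linarith)]
  ring

theorem differentiableAt_parVol (hA : IsCompact A) (hne : A.Nonempty) {r₀ : ℝ} (hr₀ : 0 < r₀)
    (h : ∀ p ∈ gaps A, p.2 - p.1 ≠ 2 * r₀) : DifferentiableAt ℝ (parVol A) r₀ := by
  have hK : ∀ᶠ r in 𝓝 r₀, 0 < r ∧ longGaps A (2 * r) = longGaps A (2 * r₀) :=
    (lt_mem_nhds hr₀).and <| ((continuous_const_mul 2).tendsto r₀).eventually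
      (eventually_longGaps_eq hA.bddBelow hA.bddAbove (by positivity) h)
  have hfin := longGaps_finite hA.bddBelow hA.bddAbove (by positivity : 0 < 2 * r₀)
  have hev : parVol A =ᶠ[𝓝 r₀] fun r =>
      sSup A - sInf A + 2 * r - ∑ p ∈ hfin.toFinset, (p.2 - p.1 - 2 * r) := by
    filter_upwards [hK] with r ⟨hr, hKr⟩
    rw [parVol_eq hA hne hr, hKr, finsum_mem_eq_finite_toFinset_sum _ hfin]
  rw [hev.differentiableAt_iff]
  fun_prop

end Real

/-- For a nonempty compact `A ⊆ ℝ`, the non-differentiability points of the parallel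
volume function are summable. -/
theorem stmt6 (A : Set ℝ) (hA : IsCompact A) (hne : A.Nonempty) :
    Summable (fun s : NDiff A => (s : ℝ)) := by
  have hgap : ∀ s : NDiff A, ∃ p : gaps A, p.1.2 - p.1.1 = 2 * s := by
    rintro ⟨s, hs, hnd⟩
    by_contra! hne2
    exact hnd (differentiableAt_parVol hA hne hs fun p hp => hne2 ⟨p, hp⟩)
  choose g hg using hgap
  have hinj : g.Injective := fun s t hst => Subtype.ext <| by
    have := hg s
    rw [hst, hg t] at this
    linarith
  simpa [Function.comp_def, hg] using
    ((summable_gap_length hA.bddBelow hA.bddAbove).comp_injective hinj).div_const 2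
end

section
/- Let A ⊆ ℝ be compact with bounded complementary intervals of lengths ℓ₁, ℓ₂, …. Then the volume function V_A(r) = λ₁(A_r) is non-differentiable at r > 0 if and only if 2r = ℓ_j for some j, i.e., 2r appears as a gap length of A. -/
open Set MeasureTheory

/-- `ℓ` is a gap length of the compact set `A ⊆ ℝ` if some bounded complementary interval
of `A` (with endpoints in `A`) has length `ℓ`. -/
def IsGapLength (A : Set ℝ) (ℓ : ℝ) : Prop :=
  ∃ a b : ℝ, a ∈ A ∧ b ∈ A ∧ a < b ∧ Set.Ioo a b ∩ A = ∅ ∧ b - a = ℓ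

/-! For `s > ε / 2` the `s`-neighbourhood of `A` is `(min A - s, max A + s)` with the middle
part `[a + s, b - s]` of every gap `(a, b)` removed, and only the finitely many gaps longer than
`ε` contribute. Hence near `r` the parallel volume is `max A - min A + 2 s - ∑ (ℓ_j - 2 s)⁺` over
a fixed finite set of gaps. Each summand is smooth except for a kink at `2 s = ℓ_j`, and kinks at
the same point all bend the same way, so they cannot cancel. -/

def IsGap (A : Set ℝ) (p : ℝ × ℝ) : Prop :=
  p.1 ∈ A ∧ p.2 ∈ A ∧ p.1 < p.2 ∧ Ioo p.1 p.2 ∩ A = ∅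

lemma isGapLength_iff {A : Set ℝ} {ℓ : ℝ} : IsGapLength A ℓ ↔ ∃ p, IsGap A p ∧ p.2 - p.1 = ℓ :=
  ⟨fun ⟨a, b, ha, hb, hab, h, hl⟩ => ⟨(a, b), ⟨ha, hb, hab, h⟩, hl⟩,
    fun ⟨p, ⟨ha, hb, hab, h⟩, hl⟩ => ⟨p.1, p.2, ha, hb, hab, h, hl⟩⟩

namespace IsGap

variable {A : Set ℝ} {p q : ℝ × ℝ}

lemma notMem_of_mem_Ioo (hp : IsGap A p) {x : ℝ} (hx : x ∈ Ioo p.1 p.2) : x ∉ A :=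
  fun hxA => (hp.2.2.2.subset ⟨hx, hxA⟩ : x ∈ (∅ : Set ℝ))

lemma snd_le_fst_of_fst_lt (hp : IsGap A p) (hq : IsGap A q) (h : p.1 < q.1) : p.2 ≤ q.1 :=
  not_lt.1 fun h' => hp.notMem_of_mem_Ioo ⟨h, h'⟩ hq.1

lemma eq_of_fst_eq (hp : IsGap A p) (hq : IsGap A q) (h : p.1 = q.1) : p = q := by
  refine Prod.ext h (le_antisymm (not_lt.1 fun h' => ?_) (not_lt.1 fun h' => ?_))
  · exact hp.notMem_of_mem_Ioo ⟨h ▸ hq.2.2.1, h'⟩ hq.2.1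
  · exact hq.notMem_of_mem_Ioo ⟨h ▸ hp.2.2.1, h'⟩ hp.2.1

lemma disjoint_Ioo (hp : IsGap A p) (hq : IsGap A q) (hpq : p ≠ q) :
    Disjoint (Ioo p.1 p.2) (Ioo q.1 q.2) := by
  rcases lt_trichotomy p.1 q.1 with h | h | h
  · exact Ioo_disjoint_Ioo.2 ((min_le_left _ _).trans
      ((hp.snd_le_fst_of_fst_lt hq h).trans (le_max_right _ _)))
  · exact absurd (hp.eq_of_fst_eq hq h) hpq
  · exact Ioo_disjoint_Ioo.2 ((min_le_right _ _).trans
      ((hq.snd_le_fst_of_fst_lt hp h).trans (le_max_left _ _)))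

end IsGap

lemma exists_isGap_mem_Ioo {A : Set ℝ} (hA : IsClosed A) {a b x : ℝ} (ha : a ∈ A) (hb : b ∈ A)
    (hax : a ≤ x) (hxb : x ≤ b) (hx : x ∉ A) : ∃ p, IsGap A p ∧ x ∈ Ioo p.1 p.2 := by
  have hL : sSup (A ∩ Iic x) ∈ A ∩ Iic x :=
    (hA.inter isClosed_Iic).csSup_mem ⟨a, ha, hax⟩ ⟨x, fun _ hy => hy.2⟩
  have hR : sInf (A ∩ Ici x) ∈ A ∩ Ici x :=
    (hA.inter isClosed_Ici).csInf_mem ⟨b, hb, hxb⟩ ⟨x, fun _ hy => hy.2⟩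
  have hxL : sSup (A ∩ Iic x) < x := hL.2.lt_of_ne fun h => hx (h ▸ hL.1)
  have hxR : x < sInf (A ∩ Ici x) := hR.2.lt_of_ne' fun h => hx (h ▸ hR.1)
  refine ⟨(sSup (A ∩ Iic x), sInf (A ∩ Ici x)), ⟨hL.1, hR.1, hxL.trans hxR, ?_⟩, hxL, hxR⟩
  refine eq_empty_of_forall_notMem fun y ⟨⟨hy₁, hy₂⟩, hyA⟩ => ?_
  rcases le_total y x with hyx | hxy
  · exact hy₁.not_ge (le_csSup ⟨x, fun _ hz => hz.2⟩ ⟨hyA, hyx⟩)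
  · exact hy₂.not_ge (csInf_le ⟨x, fun _ hz => hz.2⟩ ⟨hyA, hxy⟩)

lemma finite_setOf_isGap_lt_sub {A : Set ℝ} (hA : Bornology.IsBounded A) {ε : ℝ} (hε : 0 < ε) :
    {p : ℝ × ℝ | IsGap A p ∧ ε < p.2 - p.1}.Finite := by
  have hsub : (⋃ p : {p // IsGap A p}, Ioo p.1.1 p.1.2) ⊆ Icc (sInf A) (sSup A) :=
    iUnion_subset fun p => Ioo_subset_Icc_self.trans
      (Icc_subset_Icc (csInf_le hA.bddBelow p.2.1) (le_csSup hA.bddAbove p.2.2.1))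
  have hfin := Measure.finite_const_le_meas_of_disjoint_iUnion volume (ENNReal.ofReal_pos.2 hε)
    (fun _ => measurableSet_Ioo) (fun p q hpq => p.2.disjoint_Ioo q.2 (Subtype.coe_ne_coe.2 hpq))
    (measure_ne_top_of_subset hsub (by simp))
  refine (hfin.image Subtype.val).subset fun p ⟨hp, hlen⟩ => ⟨⟨p, hp⟩, ?_, rfl⟩
  simpa [Real.volume_Ioo] using ENNReal.ofReal_le_ofReal hlen.le

lemma setOf_infDist_lt_eq {A : Set ℝ} (hA : IsCompact A) (hne : A.Nonempty) {r : ℝ}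
    (hr : 0 < r) : {x | Metric.infDist x A < r} =
      Ioo (sInf A - r) (sSup A + r) \ ⋃ p ∈ {p | IsGap A p}, Icc (p.1 + r) (p.2 - r) := by
  have hm : sInf A ∈ A := hA.sInf_mem hne
  have hM : sSup A ∈ A := hA.sSup_mem hne
  ext x
  simp only [mem_ofPred_eq, Metric.infDist_lt_iff hne, Real.dist_eq, abs_sub_lt_iff, mem_sdiff,
    mem_Ioo, mem_iUnion, mem_Icc, not_exists, not_and, not_le]
  constructor
  · rintro ⟨a, ha, h₁, h₂⟩
    refine ⟨⟨by linarith [csInf_le hA.bddBelow ha], by linarith [le_csSup hA.bddAbove ha]⟩,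
      fun p hp hx => ?_⟩
    rcases le_or_gt a p.1 with hap | hpa
    · linarith
    · exact not_le.1 fun hpa' => hp.notMem_of_mem_Ioo ⟨hpa, by linarith⟩ ha
  · rintro ⟨⟨h₁, h₂⟩, hgap⟩
    by_cases hxA : x ∈ A
    · exact ⟨x, hxA, by linarith, by linarith⟩
    rcases lt_or_ge x (sInf A) with hxm | hmx
    · exact ⟨sInf A, hm, by linarith, by linarith⟩
    rcases le_or_gt x (sSup A) with hxM | hMx
    · obtain ⟨p, hp, hx₁, hx₂⟩ := exists_isGap_mem_Ioo hA.isClosed hm hM hmx hxM hxA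
      rcases lt_or_ge x (p.1 + r) with h | h
      · exact ⟨p.1, hp.1, by linarith, by linarith⟩
      · exact ⟨p.2, hp.2.1, by linarith, by linarith [hgap p hp h]⟩
    · exact ⟨sSup A, hM, by linarith, by linarith⟩

lemma biUnion_isGap_Icc_eq {A : Set ℝ} {ε s : ℝ} (hs : ε < 2 * s) :
    ⋃ p ∈ {p | IsGap A p}, Icc (p.1 + s) (p.2 - s) =
      ⋃ p ∈ {p : ℝ × ℝ | IsGap A p ∧ ε < p.2 - p.1}, Icc (p.1 + s) (p.2 - s) :=
  (biUnion_subset_biUnion_left fun _ hp => hp.1).antisymm' <| iUnion₂_subset fun p hp _ hx =>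
    mem_biUnion (x := p) ⟨hp, by linarith [hx.1, hx.2]⟩ hx

lemma parVol_eq_sub_sum {A : Set ℝ} (hA : IsCompact A) (hne : A.Nonempty) {ε s : ℝ}
    (hε : 0 < ε) (hs : ε < 2 * s) :
    parVol A s = sSup A - sInf A + 2 * s -
      ∑ p ∈ (finite_setOf_isGap_lt_sub hA.isBounded hε).toFinset, max (p.2 - p.1 - 2 * s) 0 := by
  set G := (finite_setOf_isGap_lt_sub hA.isBounded hε).toFinset
  have hs0 : 0 < s := by linarith
  have hGap : ∀ p ∈ G, IsGap A p := fun p hp => (Finite.mem_toFinset _ |>.1 hp).1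
  have hIcc : ∀ p : ℝ × ℝ, Icc (p.1 + s) (p.2 - s) ⊆ Ioo p.1 p.2 := fun p =>
    Icc_subset_Ioo (by linarith) (by linarith)
  have hsub : ⋃ p ∈ G, Icc (p.1 + s) (p.2 - s) ⊆ Ioo (sInf A - s) (sSup A + s) :=
    iUnion₂_subset fun p hp => (hIcc p).trans <| Ioo_subset_Ioo
      (by linarith [csInf_le hA.bddBelow (hGap p hp).1])
      (by linarith [le_csSup hA.bddAbove (hGap p hp).2.1])
  have hdisj : (G : Set (ℝ × ℝ)).PairwiseDisjoint fun p => Icc (p.1 + s) (p.2 - s) :=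
    fun p hp q hq hpq => ((hGap p hp).disjoint_Ioo (hGap q hq) hpq).mono (hIcc p) (hIcc q)
  rw [parVol, ← measureReal_def, setOf_infDist_lt_eq hA hne hs0, biUnion_isGap_Icc_eq hs,
    ← (finite_setOf_isGap_lt_sub hA.isBounded hε).coe_toFinset, Finset.set_biUnion_coe,
    measureReal_sdiff hsub (G.measurableSet_biUnion fun _ _ => measurableSet_Icc)
      measure_Ioo_lt_top.ne,
    measureReal_biUnion_finset hdisj (fun _ _ => measurableSet_Icc)
      fun _ _ => measure_Icc_lt_top.ne,
    Real.volume_real_Ioo_of_le (by linarith [csInf_le_csSup hne hA.bddBelow hA.bddAbove])]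
  simp only [Real.volume_real_Icc]
  ring_nf

lemma parVol_empty : parVol ∅ = 0 := by
  funext r
  by_cases hr : 0 < r <;> simp [parVol, hr]

lemma max_zero_eq_add_abs_div_two (y : ℝ) : max y 0 = (y + |y|) / 2 := by
  rcases le_total y 0 with h | h
  · rw [max_eq_right h, abs_of_nonpos h]; ring
  · rw [max_eq_left h, abs_of_nonneg h]; ring

lemma differentiableAt_max_sub_two_mul {ℓ r : ℝ} (h : ℓ ≠ 2 * r) :
    DifferentiableAt ℝ (fun s => max (ℓ - 2 * s) 0) r := by
  simp only [max_zero_eq_add_abs_div_two]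
  have hlin : DifferentiableAt ℝ (fun s : ℝ => ℓ - 2 * s) r := by fun_prop
  exact (hlin.add (hlin.abs (sub_ne_zero.2 h))).div_const 2

lemma not_differentiableAt_max_two_mul_sub (r : ℝ) :
    ¬ DifferentiableAt ℝ (fun s => max (2 * r - 2 * s) 0) r := by
  intro h
  -- substituting `s = r - x / 2` leaves `max x 0 = (x + |x|) / 2`, which has the kink of `|x|`
  have hcomp : DifferentiableAt ℝ (fun x : ℝ => 2 * max (2 * r - 2 * (r - x / 2)) 0 - x) 0 := by
    have : DifferentiableAt ℝ (fun x : ℝ => r - x / 2) 0 := by fun_prop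
    have h' : DifferentiableAt ℝ (fun s => max (2 * r - 2 * s) 0) (r - (0 : ℝ) / 2) := by simpa
    exact ((h'.comp 0 this).const_mul 2).sub differentiableAt_id
  refine not_differentiableAt_abs_zero (hcomp.congr_of_eventuallyEq (.of_forall fun x => ?_))
  simp only [max_zero_eq_add_abs_div_two]
  ring_nf

lemma differentiableAt_sum_max_sub_two_mul_iff {ι : Type*} (G : Finset ι) (L : ι → ℝ) (r : ℝ) :
    DifferentiableAt ℝ (fun s => ∑ i ∈ G, max (L i - 2 * s) 0) r ↔ ∀ i ∈ G, L i ≠ 2 * r := by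
  classical
  refine ⟨fun h i hi hLi => ?_,
    fun h => .fun_sum fun i hi => differentiableAt_max_sub_two_mul (h i hi)⟩
  set K := G.filter (L · = 2 * r)
  have hsplit : (fun s => ∑ i ∈ G, max (L i - 2 * s) 0) = fun s =>
      (K.card : ℝ) * max (2 * r - 2 * s) 0 +
        ∑ i ∈ G.filter (¬ L · = 2 * r), max (L i - 2 * s) 0 := by
    funext s
    rw [← Finset.sum_filter_add_sum_filter_not G (L · = 2 * r),
      Finset.sum_congr rfl fun i hi => by rw [(Finset.mem_filter.1 hi).2], Finset.sum_const,
      nsmul_eq_mul]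
  have hrest : DifferentiableAt ℝ
      (fun s => ∑ i ∈ G.filter (¬ L · = 2 * r), max (L i - 2 * s) 0) r :=
    .fun_sum fun i hi => differentiableAt_max_sub_two_mul (Finset.mem_filter.1 hi).2
  rw [hsplit, hrest.fun_add_iff_left] at h
  have hcard : (K.card : ℝ) ≠ 0 := by
    exact_mod_cast (Finset.card_pos.2 ⟨i, Finset.mem_filter.2 ⟨hi, hLi⟩⟩).ne'
  refine not_differentiableAt_max_two_mul_sub r ?_
  simpa [hcard] using h.const_mul (K.card : ℝ)⁻¹

theorem stmt8_general (A : Set ℝ) (hA : IsCompact A) (r : ℝ) (hr : 0 < r) :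
    ¬ DifferentiableAt ℝ (parVol A) r ↔ IsGapLength A (2 * r) := by
  rcases A.eq_empty_or_nonempty with rfl | hne
  · simp [parVol_empty, isGapLength_iff, IsGap]
  have hfin := finite_setOf_isGap_lt_sub hA.isBounded hr
  have hloc : parVol A =ᶠ[nhds r] fun s => sSup A - sInf A + 2 * s -
      ∑ p ∈ hfin.toFinset, max (p.2 - p.1 - 2 * s) 0 :=
    Filter.eventually_of_mem (Ioi_mem_nhds (half_lt_self hr)) fun s hs =>
      parVol_eq_sub_sum hA hne hr (by linarith [mem_Ioi.1 hs])
  rw [hloc.differentiableAt_iff, DifferentiableAt.fun_sub_iff_right (by fun_prop),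
    differentiableAt_sum_max_sub_two_mul_iff, isGapLength_iff]
  push Not
  refine ⟨fun ⟨p, hp, hlen⟩ => ⟨p, (hfin.mem_toFinset.1 hp).1, hlen⟩,
    fun ⟨p, hp, hlen⟩ => ⟨p, hfin.mem_toFinset.2 ⟨hp, by linarith⟩, hlen⟩⟩

/-- For a nonempty compact `A ⊆ ℝ`, the parallel volume function is non-differentiable at
`r > 0` if and only if `2r` appears as a gap length of `A`. -/
theorem stmt8 (A : Set ℝ) (hA : IsCompact A) (hne : A.Nonempty) (r : ℝ) (hr : 0 < r) :
    ¬ DifferentiableAt ℝ (parVol A) r ↔ IsGapLength A (2 * r) :=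
  stmt8_general A hA r hr
end

section
/- Let N ⊆ (0,∞) be an infinite set whose elements form a decreasing sequence b₁ > b₂ > … with ∑_i b_i² < ∞. Then ∫_0^{b₂} (∑_{j : b_{j+1} ≥ r} √(b_j - b_{j+1})) √r dr < ∞. -/
open Set MeasureTheory ENNReal

/-
For `0 < r ≤ b (j+1) ≤ b j`, both `√(b j - b (j+1))` and `√r` are at most `√(b j)`, so the
`j`-th summand is at most `b j` and vanishes unless `r ∈ [0, b j]`. Integrating term by term,
the whole integral is at most `∑ b j ^ 2`.
-/

lemma Real.sqrt_sub_mul_sqrt_le {a c r : ℝ} (hr : 0 ≤ r) (hrc : r ≤ c) (hca : c ≤ a) :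
    √(a - c) * √r ≤ a := by
  have ha : 0 ≤ a := hr.trans (hrc.trans hca)
  calc √(a - c) * √r ≤ √a * √a := by
        gcongr <;> linarith
    _ = a := Real.mul_self_sqrt ha

lemma lintegral_tsum_indicator_Icc_le {ι : Type*} [Countable ι] (a : ι → ℝ) :
    ∫⁻ r, ∑' j, (Icc 0 (a j)).indicator (fun _ => ENNReal.ofReal (a j)) r
      ≤ ∑' j, ENNReal.ofReal (a j ^ 2) := by
  rw [lintegral_tsum fun j => (aemeasurable_const.indicator measurableSet_Icc)]
  refine ENNReal.tsum_le_tsum fun j => ?_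
  rw [lintegral_indicator_const measurableSet_Icc, Real.volume_Icc, sub_zero]
  rcases le_total 0 (a j) with ha | ha
  · rw [← ENNReal.ofReal_mul ha, sq]
  · simp [ENNReal.ofReal_of_nonpos ha]

theorem stmt11_general (b : ℕ → ℝ) (hanti : StrictAnti b)
    (hsum : Summable (fun i => b i ^ 2)) :
    ∫⁻ r in Set.Ioo (0:ℝ) (b 2),
        (∑' j : ℕ, if 1 ≤ j ∧ r ≤ b (j + 1) then
          ENNReal.ofReal (Real.sqrt (b j - b (j + 1)) * Real.sqrt r) else 0) < ⊤ := by
  have hsummand_le : ∀ r ∈ Ioo (0:ℝ) (b 2), ∀ j,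
      (if 1 ≤ j ∧ r ≤ b (j + 1) then
        ENNReal.ofReal (Real.sqrt (b j - b (j + 1)) * Real.sqrt r) else 0)
        ≤ (Icc 0 (b j)).indicator (fun _ => ENNReal.ofReal (b j)) r := by
    intro r hr j
    split_ifs with h
    · have hle : b (j + 1) ≤ b j := hanti.antitone j.le_succ
      rw [indicator_of_mem (show r ∈ Icc 0 (b j) from ⟨hr.1.le, h.2.trans hle⟩)]
      exact ENNReal.ofReal_le_ofReal (Real.sqrt_sub_mul_sqrt_le hr.1.le h.2 hle)
    · exact zero_le
  calc _ ≤ ∫⁻ r in Ioo (0:ℝ) (b 2),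
          ∑' j, (Icc 0 (b j)).indicator (fun _ => ENNReal.ofReal (b j)) r :=
        setLIntegral_mono' measurableSet_Ioo fun r hr => ENNReal.tsum_le_tsum (hsummand_le r hr)
    _ ≤ ∫⁻ r, ∑' j, (Icc 0 (b j)).indicator (fun _ => ENNReal.ofReal (b j)) r :=
        setLIntegral_le_lintegral _ _
    _ ≤ ∑' j, ENNReal.ofReal (b j ^ 2) := lintegral_tsum_indicator_Icc_le b
    _ = ENNReal.ofReal (∑' j, b j ^ 2) :=
        (ENNReal.ofReal_tsum_of_nonneg (fun j => sq_nonneg _) hsum).symm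
    _ < ⊤ := ENNReal.ofReal_lt_top

/-- If `b 1 > b 2 > …` is a strictly decreasing positive square-summable sequence
(the elements of an infinite set `N ⊆ (0,∞)`), then
`∫_0^{b₂} (∑_{j ≥ 1, b_{j+1} ≥ r} √(b_j - b_{j+1})) √r dr < ∞`. -/
theorem stmt11 (b : ℕ → ℝ) (hanti : StrictAnti b) (hpos : ∀ i, 0 < b i)
    (hsum : Summable (fun i => b i ^ 2)) :
    ∫⁻ r in Set.Ioo (0:ℝ) (b 2),
        (∑' j : ℕ, if 1 ≤ j ∧ r ≤ b (j + 1) then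
          ENNReal.ofReal (Real.sqrt (b j - b (j + 1)) * Real.sqrt r) else 0) < ⊤ :=
  stmt11_general b hanti hsum
end
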